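/- Completeness of the instrumental control incentive criterion: if a single-decision CID contains a directed path D → Z¹ → ⋯ → Zⁿ = U with U a utility node and X = Zⁱ for some i, then there exists a compatible SCIM (with all variables Boolean, each path node copying its predecessor, decision domain {0,1}, and all off-path variables constantly 0) in which the unique optimal policy is constantly 1, E[U | Pa_D = 0] = 1, yet E[U_{X_0} | Pa_D = 0] = 0; hence an instrumental control incentive on X exists. -/

import Mathlib

attribute [local instance] Classical.propDecidable

noncomputable section

/-- Acyclicity of a directed graph. -/
def Acyclic {V : Type} (E : V → V → Prop) : Prop := ∀ v, ¬ Relation.TransGen E v v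

/-- A walk in the digraph: a nonempty list of vertices where consecutive
vertices are joined by an edge in some direction. -/
def IsWalk {V : Type} (E : V → V → Prop) (p : List V) : Prop :=
  p ≠ [] ∧ p.Chain' (fun a b => E a b ∨ E b a)

/-- A consecutive triple `a, b, c` blocks a path w.r.t. `S` if `b` is a collider
with no descendant (including itself) in `S`, or a non-collider in `S`. -/
def BlockedTriple {V : Type} (E : V → V → Prop) (S : Set V) (a b c : V) : Prop :=
  (E a b ∧ E c b ∧ ∀ w, Relation.ReflTransGen E b w → w ∉ S) ∨
  (¬ (E a b ∧ E c b) ∧ b ∈ S)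

/-- A path is d-separated (blocked) by `S`. -/
def BlocksPath {V : Type} (E : V → V → Prop) (S : Set V) (p : List V) : Prop :=
  (∃ x, p.head? = some x ∧ x ∈ S) ∨ (∃ x, p.getLast? = some x ∧ x ∈ S) ∨
  (∃ l a b c r, p = l ++ a :: b :: c :: r ∧ BlockedTriple E S a b c)

/-- `A` is d-separated from `B` given `S`. -/
def DSep {V : Type} (E : V → V → Prop) (A B S : Set V) : Prop :=
  ∀ p : List V, IsWalk E p → (∃ a ∈ A, p.head? = some a) →
    (∃ b ∈ B, p.getLast? = some b) → BlocksPath E S p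

/-- An observation `X ∈ Pa_D` is requisite in the graph `E` with decision `D` and
utility nodes `U` if it is d-connected to the downstream utilities `U ∩ Desc(D)`
given the other observations and the decision, `(Pa_D ∪ {D}) \ {X}`. -/
def RequisiteG {V : Type} (E : V → V → Prop) (D : V) (U : Set V) (X : V) : Prop :=
  E X D ∧ ¬ DSep E {X} {u | u ∈ U ∧ Relation.ReflTransGen E D u}
      {v | (E v D ∧ v ≠ X) ∨ v = D}

/-- The edge relation of the minimal reduction: all information links from
nonrequisite observations are removed. -/
def ReducedEdge {V : Type} (E : V → V → Prop) (D : V) (U : Set V) : V → V → Prop :=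
  fun a b => E a b ∧ (b = D → RequisiteG E D U a)

variable {V : Type} [Fintype V] [DecidableEq V]

/-- A single-decision structural causal influence model (SCIM): a causal
influence diagram (DAG with a decision node `D` and childless utility nodes
`Util` whose values are interpreted in `ℝ` via `utilReal`), finite nonempty
domains, structural functions for all non-decision nodes depending only on
parents, and mutually independent finitely-supported exogenous variables. -/
structure SCIM (V : Type) [Fintype V] [DecidableEq V] where
  Edge : V → V → Prop
  acyclic : Acyclic Edge
  D : V
  Util : Finset V
  utilNotD : D ∉ Util
  utilNoChild : ∀ u ∈ Util, ∀ v, ¬ Edge u v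
  Dom : V → Type
  domFin : ∀ v, Fintype (Dom v)
  domNE : ∀ v, Nonempty (Dom v)
  utilReal : (u : V) → Dom u → ℝ
  ExoDom : V → Type
  exoFin : ∀ v, Fintype (ExoDom v)
  exoNE : ∀ v, Nonempty (ExoDom v)
  f : (v : V) → ((p : V) → Dom p) → ExoDom v → Dom v
  localDep : ∀ v a a' e, (∀ p, Edge p v → a p = a' p) → f v a e = f v a' e
  P : (v : V) → ExoDom v → ℝ
  Pnonneg : ∀ v e, 0 ≤ P v e
  Psum : ∀ v, ∑ e ∈ (exoFin v).elems, P v e = 1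

namespace SCIM

variable (M : SCIM V)

/-- Joint (product) probability of an exogenous setting. -/
def Pjoint (ε : ∀ v, M.ExoDom v) : ℝ := ∏ v, M.P v (ε v)

/-- All exogenous settings. -/
def exoElems : Finset (∀ v, M.ExoDom v) :=
  letI := M.exoFin; Finset.univ

/-- A default assignment of values. -/
def dflt : ∀ v, M.Dom v := fun v => (M.domNE v).some

/-- `a` solves the system of structural equations `g` at exogenous setting `ε`. -/
def Solves (g : (v : V) → ((p : V) → M.Dom p) → M.ExoDom v → M.Dom v)
    (ε : ∀ v, M.ExoDom v) (a : ∀ v, M.Dom v) : Prop :=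
  ∀ v, a v = g v a (ε v)

/-- The (unique, by acyclicity) solution of the structural equations `g`
at `ε`: the values of all endogenous variables obtained by recursive
application of the structural functions. -/
def sol (g : (v : V) → ((p : V) → M.Dom p) → M.ExoDom v → M.Dom v)
    (ε : ∀ v, M.ExoDom v) : ∀ v, M.Dom v :=
  if h : ∃ a, M.Solves g ε a then h.choose else M.dflt

/-- Replace the structural function at node `X` by `gX` (a soft intervention). -/
def replaceAt (g : (v : V) → ((p : V) → M.Dom p) → M.ExoDom v → M.Dom v) (X : V)
    (gX : ((p : V) → M.Dom p) → M.ExoDom X → M.Dom X) :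
    (v : V) → ((p : V) → M.Dom p) → M.ExoDom v → M.Dom v :=
  fun v => if h : v = X then (by subst h; exact gX) else g v

/-- Hard intervention do(`X` = `x`): constant functions on `X`. -/
def doSet (g : (v : V) → ((p : V) → M.Dom p) → M.ExoDom v → M.Dom v)
    (X : Set V) (x : ∀ v, M.Dom v) :
    (v : V) → ((p : V) → M.Dom p) → M.ExoDom v → M.Dom v :=
  fun v => if v ∈ X then fun _ _ => x v else g v

/-- A policy: a structural function for `D` that depends only on the
observations `Pa_D` (and the exogenous variable of `D`). -/
def IsPolicy (π : ((p : V) → M.Dom p) → M.ExoDom M.D → M.Dom M.D) : Prop :=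
  ∀ a a' e, (∀ p, M.Edge p M.D → a p = a' p) → π a e = π a' e

/-- The policy-completed system of structural functions. -/
def gpol (π : ((p : V) → M.Dom p) → M.ExoDom M.D → M.Dom M.D) :
    (v : V) → ((p : V) → M.Dom p) → M.ExoDom v → M.Dom v :=
  M.replaceAt M.f M.D π

/-- Total utility of an assignment: the sum of the utility-node values. -/
def TotalU (a : ∀ v, M.Dom v) : ℝ := ∑ u ∈ M.Util, M.utilReal u (a u)

/-- Expected total utility of a system of structural equations `g`. -/
def EUg (g : (v : V) → ((p : V) → M.Dom p) → M.ExoDom v → M.Dom v) : ℝ :=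
  ∑ ε ∈ M.exoElems, M.Pjoint ε * M.TotalU (M.sol g ε)

/-- Expected total utility of a policy. -/
def EU (π : ((p : V) → M.Dom p) → M.ExoDom M.D → M.Dom M.D) : ℝ :=
  M.EUg (M.gpol π)

/-- An optimal policy maximizes expected total utility. -/
def IsOptimal (π : ((p : V) → M.Dom p) → M.ExoDom M.D → M.Dom M.D) : Prop :=
  M.IsPolicy π ∧ ∀ π', M.IsPolicy π' → M.EU π' ≤ M.EU π

/-- Probability of an event over exogenous settings. -/
def PrEv (Ev : (∀ v, M.ExoDom v) → Prop) : ℝ :=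
  ∑ ε ∈ M.exoElems, if Ev ε then M.Pjoint ε else 0

/-- Conditional expectation of `h` given the event `Ev`. -/
def condExp (h : (∀ v, M.ExoDom v) → ℝ) (Ev : (∀ v, M.ExoDom v) → Prop) : ℝ :=
  (∑ ε ∈ M.exoElems, if Ev ε then M.Pjoint ε * h ε else 0) / M.PrEv Ev

/-- Conditional probability of `h` given `Ev`. -/
def condProb (h Ev : (∀ v, M.ExoDom v) → Prop) : ℝ :=
  M.PrEv (fun ε => h ε ∧ Ev ε) / M.PrEv Ev

/-- The event that the decision context (the observations `Pa_D`) takes the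
values `pa`, under policy `π`. -/
def CtxEvent (π : ((p : V) → M.Dom p) → M.ExoDom M.D → M.Dom M.D)
    (pa : ∀ v, M.Dom v) (ε : ∀ v, M.ExoDom v) : Prop :=
  ∀ p, M.Edge p M.D → M.sol (M.gpol π) ε p = pa p

/-- The potential response under the hard intervention do(`X` = `x`),
in the policy-completed model: an assignment to all variables. -/
def response (π : ((p : V) → M.Dom p) → M.ExoDom M.D → M.Dom M.D)
    (X : V) (x : M.Dom X) (ε : ∀ v, M.ExoDom v) : ∀ v, M.Dom v :=
  M.sol (M.doSet (M.gpol π) {X} (Function.update M.dflt X x)) ε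

/-- The nested-counterfactual assignment realizing `U_{X_d}`: intervene on `X`
with the value `X_d(ε)` it would take under do(`D` = `d`). -/
def nestedSol (π : ((p : V) → M.Dom p) → M.ExoDom M.D → M.Dom M.D)
    (X : V) (d : M.Dom M.D) (ε : ∀ v, M.ExoDom v) : ∀ v, M.Dom v :=
  M.response π X (M.response π M.D d ε X) ε

/-- Instrumental control incentive on `X`: in some decision context `pa`
(of positive probability), every optimal policy has
`E[U_{X_d} | pa] ≠ E[U | pa]` for some `d`. -/
def HasICI (X : V) : Prop :=
  ∃ pa : ∀ v, M.Dom v, ∀ π, M.IsOptimal π →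
    0 < M.PrEv (M.CtxEvent π pa) ∧
    ∃ d : M.Dom M.D,
      M.condExp (fun ε => M.TotalU (M.nestedSol π X d ε)) (M.CtxEvent π pa) ≠
      M.condExp (fun ε => M.TotalU (M.sol (M.gpol π) ε)) (M.CtxEvent π pa)

/-- A policy that does not use the information link `X → D`. -/
def IsPolicyWithout (X : V)
    (π : ((p : V) → M.Dom p) → M.ExoDom M.D → M.Dom M.D) : Prop :=
  M.IsPolicy π ∧ ∀ a a' e, (∀ p, M.Edge p M.D → p ≠ X → a p = a' p) → π a e = π a' e

/-- Counterfactual fairness of policy `π` w.r.t. sensitive attribute `A`: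
`Pr(D_{a'} = d | pa_D, a) = Pr(D = d | pa_D, a)` for all `d`, contexts `pa_D`,
and attribute values `a, a'` with positive probability of the conditioning event. -/
def CFair (π : ((p : V) → M.Dom p) → M.ExoDom M.D → M.Dom M.D) (A : V) : Prop :=
  ∀ (d : M.Dom M.D) (pa : ∀ v, M.Dom v) (a a' : M.Dom A),
    0 < M.PrEv (fun ε => M.CtxEvent π pa ε ∧ M.sol (M.gpol π) ε A = a) →
    M.condProb (fun ε => M.response π A a' ε M.D = d)
        (fun ε => M.CtxEvent π pa ε ∧ M.sol (M.gpol π) ε A = a) =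
    M.condProb (fun ε => M.sol (M.gpol π) ε M.D = d)
        (fun ε => M.CtxEvent π pa ε ∧ M.sol (M.gpol π) ε A = a)

end SCIM

/-! Along the directed path `D ⇝ X ⇝ u` every node copies a parent on the path (descendants of `X`
copying a descendant of `X`), every other utility node is constantly `false`, and every other
node copies its own fair exogenous coin. The utility then equals the decision, so the constant
policy `true` is optimal and, since the coins make every observation pattern of `Pa_D` possible,
it is the only optimal policy. Setting `X` to the value it takes under `do(D = false)` propagates
`false` down to `u`, so `E[U_{X_false} | pa] = 0 ≠ 1 = E[U | pa]`. -/

section Graph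

open Relation

variable {α : Type} {E : α → α → Prop}

theorem Acyclic.wellFounded [Finite α] (hac : Acyclic E) : WellFounded (TransGen E) :=
  haveI : IsTrans α (TransGen E) := ⟨fun _ _ _ => TransGen.trans⟩
  haveI : Std.Irrefl (TransGen E) := ⟨hac⟩
  Finite.wellFounded_of_trans_of_irrefl _

theorem Acyclic.eq_of_reflTransGen (hac : Acyclic E) {a b : α} (hab : ReflTransGen E a b)
    (hba : ReflTransGen E b a) : a = b := by
  rcases hab.cases_head with rfl | ⟨c, hac', hcb⟩
  · rfl
  · exact absurd (TransGen.head' hac' (hcb.trans hba)) (hac a)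

theorem Acyclic.forall_eq_of_exists_parent [Finite α] {β : Type*} (hac : Acyclic E)
    {S : Set α} {r : α} {a : α → β} (h : ∀ v ∈ S, v ≠ r → ∃ p ∈ S, E p v ∧ a v = a p) :
    ∀ v ∈ S, a v = a r := by
  intro v
  induction v using hac.wellFounded.induction with
  | _ v ih =>
    intro hv
    by_cases hvr : v = r
    · rw [hvr]
    obtain ⟨p, hpS, hpv, hap⟩ := h v hv hvr
    rw [hap]
    exact ih p (TransGen.single hpv) hpS

theorem exists_parent_of_reflTransGen {D X v : α} (hDX : ReflTransGen E D X)
    (hDv : ReflTransGen E D v) (hvD : v ≠ D) :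
    ∃ p, E p v ∧ ReflTransGen E D p ∧ (ReflTransGen E X v → v ≠ X → ReflTransGen E X p) := by
  by_cases hXv : ReflTransGen E X v ∧ v ≠ X
  · obtain ⟨hXv, hvX⟩ := hXv
    rcases hXv.cases_tail with rfl | ⟨p, hXp, hpv⟩
    · exact absurd rfl hvX
    · exact ⟨p, hpv, hDX.trans hXp, fun _ _ => hXp⟩
  · rcases hDv.cases_tail with rfl | ⟨p, hDp, hpv⟩
    · exact absurd rfl hvD
    · exact ⟨p, hpv, hDp, fun h1 h2 => absurd ⟨h1, h2⟩ hXv⟩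

end Graph

namespace SCIM

variable (M : SCIM V)

def DependsOnParents (g : (v : V) → ((p : V) → M.Dom p) → M.ExoDom v → M.Dom v) : Prop :=
  ∀ v a a' e, (∀ p, M.Edge p v → a p = a' p) → g v a e = g v a' e

variable {M}

theorem DependsOnParents.gpol {π : ((p : V) → M.Dom p) → M.ExoDom M.D → M.Dom M.D}
    (hπ : M.IsPolicy π) : M.DependsOnParents (M.gpol π) := by
  intro v a a' e hpar
  by_cases h : v = M.D
  · subst h
    simpa [SCIM.gpol, SCIM.replaceAt] using hπ a a' e hpar
  · simpa [SCIM.gpol, SCIM.replaceAt, h] using M.localDep v a a' e hpar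

theorem DependsOnParents.doSet {g : (v : V) → ((p : V) → M.Dom p) → M.ExoDom v → M.Dom v}
    (hg : M.DependsOnParents g) (S : Set V) (x : ∀ v, M.Dom v) :
    M.DependsOnParents (M.doSet g S x) := by
  intro v a a' e hpar
  by_cases h : v ∈ S
  · simp [SCIM.doSet, h]
  · simpa [SCIM.doSet, h] using hg v a a' e hpar

theorem DependsOnParents.exists_solves {g : (v : V) → ((p : V) → M.Dom p) → M.ExoDom v → M.Dom v}
    (hg : M.DependsOnParents g) (ε : ∀ v, M.ExoDom v) : ∃ a, M.Solves g ε a := by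
  have wf := M.acyclic.wellFounded
  refine ⟨wf.fix (C := M.Dom) fun v ih =>
    g v (fun p => if h : Relation.TransGen M.Edge p v then ih p h else M.dflt p) (ε v),
    fun v => ?_⟩
  rw [wf.fix_eq]
  exact hg v _ _ (ε v) fun p hp => by rw [dif_pos (Relation.TransGen.single hp)]

theorem DependsOnParents.solves_sol {g : (v : V) → ((p : V) → M.Dom p) → M.ExoDom v → M.Dom v}
    (hg : M.DependsOnParents g) (ε : ∀ v, M.ExoDom v) : M.Solves g ε (M.sol g ε) := by
  have h := hg.exists_solves ε
  rw [SCIM.sol, dif_pos h]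
  exact h.choose_spec

theorem gpol_self (π : ((p : V) → M.Dom p) → M.ExoDom M.D → M.Dom M.D) :
    M.gpol π M.D = π := by
  simp [SCIM.gpol, SCIM.replaceAt]

theorem gpol_of_ne (π : ((p : V) → M.Dom p) → M.ExoDom M.D → M.Dom M.D) {v : V}
    (h : v ≠ M.D) : M.gpol π v = M.f v :=
  dif_neg h

theorem doSet_of_mem (g : (v : V) → ((p : V) → M.Dom p) → M.ExoDom v → M.Dom v)
    {S : Set V} (x : ∀ v, M.Dom v) {v : V} (h : v ∈ S) :
    M.doSet g S x v = fun _ _ => x v :=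
  if_pos h

theorem doSet_of_not_mem (g : (v : V) → ((p : V) → M.Dom p) → M.ExoDom v → M.Dom v)
    {S : Set V} (x : ∀ v, M.Dom v) {v : V} (h : v ∉ S) : M.doSet g S x v = g v :=
  if_neg h

section Solves

variable {π : ((p : V) → M.Dom p) → M.ExoDom M.D → M.Dom M.D} {ε : ∀ v, M.ExoDom v}
  {a : ∀ v, M.Dom v}

theorem Solves.eq_policy (h : M.Solves (M.gpol π) ε a) : a M.D = π a (ε M.D) := by
  rw [h M.D, gpol_self]

theorem Solves.eq_f (h : M.Solves (M.gpol π) ε a) {v : V} (hv : v ≠ M.D) :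
    a v = M.f v a (ε v) := by
  rw [h v, gpol_of_ne π hv]

theorem Solves.doSet_eq {g : (v : V) → ((p : V) → M.Dom p) → M.ExoDom v → M.Dom v} {S : Set V}
    {x : ∀ v, M.Dom v} (h : M.Solves (M.doSet g S x) ε a) {v : V} (hv : v ∈ S) : a v = x v := by
  rw [h v, doSet_of_mem g x hv]

theorem Solves.doSet_gpol_eq_f {S : Set V} {x : ∀ v, M.Dom v}
    (h : M.Solves (M.doSet (M.gpol π) S x) ε a) {v : V} (hvS : v ∉ S) (hvD : v ≠ M.D) :
    a v = M.f v a (ε v) := by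
  rw [h v, doSet_of_not_mem _ x hvS, gpol_of_ne π hvD]

end Solves

theorem mem_exoElems (ε : ∀ v, M.ExoDom v) : ε ∈ M.exoElems := by
  let := M.exoFin
  exact Finset.mem_univ ε

theorem condExp_eq_of_forall {h : (∀ v, M.ExoDom v) → ℝ} {Ev : (∀ v, M.ExoDom v) → Prop}
    {c : ℝ} (hpos : M.PrEv Ev ≠ 0) (hc : ∀ ε, h ε = c) : M.condExp h Ev = c := by
  have hsum : (∑ ε ∈ M.exoElems, if Ev ε then M.Pjoint ε * h ε else 0) = M.PrEv Ev * c := by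
    rw [SCIM.PrEv, Finset.sum_mul]
    exact Finset.sum_congr rfl fun ε _ => by split_ifs <;> simp [hc]
  rw [SCIM.condExp, hsum, mul_div_cancel_left₀ _ hpos]

end SCIM

section RouteModel

open Relation

def routeModel {E : V → V → Prop} (hac : Acyclic E) {D : V} {Util : Finset V} (hD : D ∉ Util)
    (hchild : ∀ u ∈ Util, ∀ v, ¬ E u v) (u : V) (pred : V → V)
    (hpred : ∀ v, ReflTransGen E D v → v ≠ D → E (pred v) v) : SCIM V where
  Edge := E
  acyclic := hac
  D := D
  Util := Util
  utilNotD := hD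
  utilNoChild := hchild
  Dom _ := Bool
  domFin _ := inferInstance
  domNE _ := ⟨true⟩
  utilReal _ b := if b then 1 else 0
  ExoDom _ := Bool
  exoFin _ := inferInstance
  exoNE _ := ⟨true⟩
  f v a e :=
    if v ∈ Util ∧ v ≠ u then false else if ReflTransGen E D v ∧ v ≠ D then a (pred v) else e
  localDep v a a' e h := by
    split_ifs with _ hv
    · rfl
    · exact h _ (hpred v hv.1 hv.2)
    · rfl
  P _ _ := 1 / 2
  Pnonneg _ _ := by norm_num
  Psum _ := by
    change ∑ _e : Bool, (1 / 2 : ℝ) = 1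
    norm_num

variable {E : V → V → Prop} {hac : Acyclic E} {D : V} {Util : Finset V} {hD : D ∉ Util}
  {hchild : ∀ u ∈ Util, ∀ v, ¬ E u v} {u : V} {pred : V → V}
  {hpred : ∀ v, ReflTransGen E D v → v ≠ D → E (pred v) v}

local notation "𝓜" => routeModel hac hD hchild u pred hpred

section Solution

variable {ε : V → Bool} {a : V → Bool} {r : V}

theorem routeModel_utility_eq_false (ha : ∀ v, v ≠ D → v ≠ r → a v = (𝓜).f v a (ε v))
    {w : V} (hw : w ∈ Util) (hwu : w ≠ u) (hwr : w ≠ r) : a w = false :=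
  (ha w (ne_of_mem_of_not_mem hw hD) hwr).trans (if_pos ⟨hw, hwu⟩)

theorem routeModel_parent_eq (ha : ∀ v, v ≠ D → a v = (𝓜).f v a (ε v)) {p : V} (hp : E p D) :
    a p = ε p := by
  have hpD : ¬ ReflTransGen E D p := fun h => hac D (TransGen.tail' h hp)
  rw [ha p fun h => hac D (TransGen.single (h ▸ hp))]
  exact (if_neg fun h => hchild p h.1 D hp).trans (if_neg fun h => hpD h.1)

theorem routeModel_eq_of_reflTransGen (ha : ∀ v, v ≠ D → v ≠ r → a v = (𝓜).f v a (ε v))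
    (hDr : ReflTransGen E D r)
    (hpr : ∀ v, ReflTransGen E r v → v ≠ r → ReflTransGen E r (pred v)) {v : V}
    (hrv : ReflTransGen E r v) (hvU : v ∈ Util → v = u) : a v = a r := by
  refine hac.forall_eq_of_exists_parent (S := {v | ReflTransGen E r v ∧ (v ∈ Util → v = u)})
    ?_ v ⟨hrv, hvU⟩
  rintro v ⟨hrv, hvU⟩ hvr
  have hvD : v ≠ D := fun h => hvr (h.trans (hac.eq_of_reflTransGen hDr (h ▸ hrv)))
  have hDv := hDr.trans hrv
  have hE := hpred v hDv hvD
  refine ⟨pred v, ⟨hpr v hrv hvr, fun h => absurd hE (hchild _ h v)⟩, hE, ?_⟩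
  rw [ha v hvD hvr]
  exact (if_neg fun h => h.2 (hvU h.1)).trans (if_pos ⟨hDv, hvD⟩)

end Solution

theorem routeModel_totalU {a : V → Bool} (hu : u ∈ Util) (h : ∀ w ∈ Util, w ≠ u → a w = false) :
    (𝓜).TotalU a = if a u then 1 else 0 :=
  Finset.sum_eq_single_of_mem u hu fun w hw hwu => by
    change (if a w then (1 : ℝ) else 0) = 0
    rw [h w hw hwu]
    rfl

section Policy

variable {π : (V → Bool) → Bool → Bool}

theorem routeModel_totalU_sol_gpol (hu : u ∈ Util) (hDu : ReflTransGen E D u)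
    (hpredD : ∀ v, ReflTransGen E D v → v ≠ D → ReflTransGen E D (pred v))
    (hπ : (𝓜).IsPolicy π) (ε : V → Bool) :
    (𝓜).TotalU ((𝓜).sol ((𝓜).gpol π) ε) = if π ε (ε D) then 1 else 0 := by
  have hsol : (𝓜).Solves ((𝓜).gpol π) ε _ := (SCIM.DependsOnParents.gpol hπ).solves_sol ε
  set a : V → Bool := (𝓜).sol ((𝓜).gpol π) ε
  have ha : ∀ v, v ≠ D → a v = (𝓜).f v a (ε v) := fun v hv => hsol.eq_f hv
  have haD : a D = π ε (ε D) :=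
    hsol.eq_policy.trans (hπ _ _ _ fun p hp => routeModel_parent_eq ha hp)
  have hau : a u = a D := routeModel_eq_of_reflTransGen
    (fun v hv _ => ha v hv) .refl hpredD hDu fun _ => rfl
  rw [routeModel_totalU hu fun w hw hwu =>
    routeModel_utility_eq_false (fun v hv _ => ha v hv) hw hwu (ne_of_mem_of_not_mem hw hD),
    hau, haD]

/-- `X_false` is `false` because `do(D = false)` propagates down the path to `X`; then
`do(X = false)` propagates down to `u`. -/
theorem routeModel_totalU_nestedSol {X : V} (hu : u ∈ Util) (hDX : ReflTransGen E D X)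
    (hXu : ReflTransGen E X u)
    (hpredD : ∀ v, ReflTransGen E D v → v ≠ D → ReflTransGen E D (pred v))
    (hpredX : ∀ v, ReflTransGen E X v → v ≠ X → ReflTransGen E X (pred v))
    (hπ : (𝓜).IsPolicy π) (ε : V → Bool) : (𝓜).TotalU ((𝓜).nestedSol π X false ε) = 0 := by
  have hXU : X ∈ Util → X = u := fun hX =>
    hXu.cases_head.resolve_right fun ⟨c, hXc, _⟩ => hchild X hX c hXc
  have hloc := SCIM.DependsOnParents.gpol hπ
  have hsolb := (hloc.doSet {D} (Function.update (𝓜).dflt D false)).solves_sol ε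
  set b : V → Bool := (𝓜).response π D false ε
  have hbX : b X = false := by
    have hbD : b D = false := (hsolb.doSet_eq (Set.mem_singleton D)).trans
      (Function.update_self D false (𝓜).dflt)
    rw [← hbD]
    exact routeModel_eq_of_reflTransGen
      (fun v hv _ => hsolb.doSet_gpol_eq_f (Set.notMem_singleton_iff.2 hv) hv) .refl hpredD hDX hXU
  change (𝓜).TotalU ((𝓜).response π X (b X) ε) = 0
  rw [hbX]
  have hsolc := (hloc.doSet {X} (Function.update (𝓜).dflt X false)).solves_sol ε
  set c : V → Bool := (𝓜).response π X false ε
  have hc : ∀ v, v ≠ D → v ≠ X → c v = (𝓜).f v c (ε v) := fun v hvD hvX =>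
    hsolc.doSet_gpol_eq_f (Set.notMem_singleton_iff.2 hvX) hvD
  have hcX : c X = false := (hsolc.doSet_eq (Set.mem_singleton X)).trans
    (Function.update_self X false (𝓜).dflt)
  have hcu : c u = c X := routeModel_eq_of_reflTransGen hc hDX hpredX hXu fun _ => rfl
  rw [routeModel_totalU hu fun w hw hwu =>
    routeModel_utility_eq_false hc hw hwu fun h => hwu (h.trans (hXU (h ▸ hw))), hcu, hcX]
  rfl

theorem routeModel_pjoint_pos (ε : V → Bool) : 0 < (𝓜).Pjoint ε :=
  Finset.prod_pos fun _ _ => one_half_pos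

theorem routeModel_prEv_ctxEvent_pos (hπ : (𝓜).IsPolicy π) :
    0 < (𝓜).PrEv ((𝓜).CtxEvent π fun _ => true) := by
  have hsol := (SCIM.DependsOnParents.gpol hπ).solves_sol fun _ => true
  have hctx : (𝓜).CtxEvent π (fun _ => true) fun _ => true := fun p hp =>
    routeModel_parent_eq (fun v hv => hsol.eq_f hv) hp
  refine Finset.sum_pos' (fun ε _ => ?_) ⟨fun _ => true, SCIM.mem_exoElems _, ?_⟩
  · split_ifs
    exacts [(routeModel_pjoint_pos ε).le, le_rfl]
  · rw [if_pos hctx]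
    exact routeModel_pjoint_pos _

theorem routeModel_eu (hu : u ∈ Util) (hDu : ReflTransGen E D u)
    (hpredD : ∀ v, ReflTransGen E D v → v ≠ D → ReflTransGen E D (pred v))
    (hπ : (𝓜).IsPolicy π) :
    (𝓜).EU π = ∑ ε ∈ (𝓜).exoElems, (𝓜).Pjoint ε * if π ε (ε D) then 1 else 0 :=
  Finset.sum_congr rfl fun ε _ =>
    congrArg _ (routeModel_totalU_sol_gpol hu hDu hpredD hπ ε)

theorem routeModel_isPolicy_const (b : Bool) : (𝓜).IsPolicy fun _ _ => b :=
  fun _ _ _ _ => rfl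

theorem routeModel_isOptimal_true (hu : u ∈ Util) (hDu : ReflTransGen E D u)
    (hpredD : ∀ v, ReflTransGen E D v → v ≠ D → ReflTransGen E D (pred v)) :
    (𝓜).IsOptimal fun _ _ => true := by
  refine ⟨routeModel_isPolicy_const true, fun π hπ => ?_⟩
  rw [routeModel_eu hu hDu hpredD hπ,
    routeModel_eu hu hDu hpredD (routeModel_isPolicy_const true)]
  refine Finset.sum_le_sum fun ε _ => mul_le_mul_of_nonneg_left ?_ (routeModel_pjoint_pos ε).le
  split <;> simp

/-- A policy choosing `false` on a single exogenous setting loses its positive weight; and since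
`Dom = ExoDom = Bool`, any argument `(a, e)` of a policy is of the form `(ε, ε D)`. -/
theorem routeModel_eq_true_of_isOptimal (hu : u ∈ Util) (hDu : ReflTransGen E D u)
    (hpredD : ∀ v, ReflTransGen E D v → v ≠ D → ReflTransGen E D (pred v))
    {π : (V → Bool) → Bool → Bool} (hπ : (𝓜).IsOptimal π) (a : V → Bool) (e : Bool) :
    π a e = true := by
  have hall : ∀ ε : V → Bool, π ε (ε D) = true := by
    by_contra! ⟨ε₀, hε₀⟩
    have hlt : (𝓜).EU π < (𝓜).EU fun _ _ => true := by
      rw [routeModel_eu hu hDu hpredD hπ.1,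
        routeModel_eu hu hDu hpredD (routeModel_isPolicy_const true)]
      refine Finset.sum_lt_sum
        (fun ε _ => mul_le_mul_of_nonneg_left ?_ (routeModel_pjoint_pos ε).le)
        ⟨ε₀, SCIM.mem_exoElems _, ?_⟩
      · split <;> simp
      · simpa [hε₀] using routeModel_pjoint_pos ε₀
    exact (hπ.2 _ (routeModel_isPolicy_const true)).not_gt hlt
  have hpD p (hp : E p D) : p ≠ D := fun h => hac D (.single (h ▸ hp))
  calc π a e = π (Function.update a D e) e :=
        hπ.1 _ _ _ fun p hp => (Function.update_of_ne (hpD p hp) e a).symm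
    _ = true := by simpa using hall (Function.update a D e)

end Policy

end RouteModel

/-- ICI criterion completeness: if the CID contains a directed
path `D ⇝ X ⇝ U` to a utility node `U`, then there is a compatible SCIM with all
domains Boolean in which every optimal policy is the constant policy `d₁`, and in
the decision context `pa`, `E[U | pa] = 1` while `E[U_{X_{d₀}} | pa] = 0`; hence
there is an instrumental control incentive on `X`. -/
theorem ici_completeness {V : Type} [Fintype V] [DecidableEq V]
    (E : V → V → Prop) (hac : Acyclic E) (D : V) (Util : Finset V)
    (hD : D ∉ Util) (hchild : ∀ u ∈ Util, ∀ v, ¬ E u v) (X : V)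
    (hpath : Relation.ReflTransGen E D X ∧ ∃ u ∈ Util, Relation.ReflTransGen E X u) :
    ∃ M : SCIM V, M.Edge = E ∧ M.D = D ∧ M.Util = Util ∧
      (∀ v, M.Dom v = Bool) ∧
      ∃ (pa : ∀ v, M.Dom v) (d₀ d₁ : M.Dom M.D),
        d₀ ≠ d₁ ∧
        (∀ π, M.IsOptimal π → ∀ a e, π a e = d₁) ∧
        0 < M.PrEv (M.CtxEvent (fun _ _ => d₁) pa) ∧
        (∀ π, M.IsOptimal π →
          M.condExp (fun ε => M.TotalU (M.sol (M.gpol π) ε)) (M.CtxEvent π pa) = 1 ∧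
          M.condExp (fun ε => M.TotalU (M.nestedSol π X d₀ ε)) (M.CtxEvent π pa) = 0) ∧
        M.HasICI X := by
  obtain ⟨hDX, u, hu, hXu⟩ := hpath
  have hDu := hDX.trans hXu
  choose! pred hpred using fun v => exists_parent_of_reflTransGen (v := v) hDX
  have hpredD v hDv hvD := (hpred v hDv hvD).2.1
  have hpredX v hXv hvX := (hpred v (hDX.trans hXv)
    fun h => hvX (h.trans (hac.eq_of_reflTransGen hDX (h ▸ hXv)))).2.2 hXv hvX
  set M := routeModel hac hD hchild u pred fun v hDv hvD => (hpred v hDv hvD).1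
  have hopt π (hπ : M.IsOptimal π) := routeModel_eq_true_of_isOptimal hu hDu hpredD hπ
  have hpos π (hπ : M.IsPolicy π) := routeModel_prEv_ctxEvent_pos hπ
  have hcond π (hπ : M.IsOptimal π) :
      M.condExp (fun ε => M.TotalU (M.sol (M.gpol π) ε)) (M.CtxEvent π fun _ => true) = 1 ∧
      M.condExp (fun ε => M.TotalU (M.nestedSol π X false ε)) (M.CtxEvent π fun _ => true) = 0 :=
    ⟨SCIM.condExp_eq_of_forall (hpos π hπ.1).ne' fun ε =>
      (routeModel_totalU_sol_gpol hu hDu hpredD hπ.1 ε).trans (if_pos (hopt π hπ _ _)),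
    SCIM.condExp_eq_of_forall (hpos π hπ.1).ne'
      (routeModel_totalU_nestedSol hu hDX hXu hpredD hpredX hπ.1)⟩
  refine ⟨M, rfl, rfl, rfl, fun _ => rfl, fun _ => true, false, true, Bool.false_ne_true,
    hopt, hpos _ (routeModel_isPolicy_const true), hcond,
    fun _ => true, fun π hπ => ⟨hpos π hπ.1, false, ?_⟩⟩
  rw [(hcond π hπ).1, (hcond π hπ).2]
  exact zero_ne_one
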